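/- For any integer n, the splitting field of f_n(X) = X^3 - nX^2 - (n+3)X - 1 over ℚ is a cyclic cubic extension of ℚ, i.e., Galois of degree 3 with cyclic Galois group. -/

import Mathlib

/-! The Möbius transformation `x ↦ -1 / (1 + x)` has order 3 and permutes the roots of
`f_n`, so any single root `ρ` generates the splitting field. Since `f_n` is monic with constant
term `-1` and neither `1` nor `-1` is a root, it is irreducible over `ℚ`, hence
`[ℚ(ρ) : ℚ] = 3`; a Galois group of prime order is cyclic. -/

open Polynomial IntermediateField Module

section SplittingField

variable {K L : Type*} [Field K] [Field L] [Algebra K L]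

theorem IntermediateField.adjoin_simple_eq_top_of_rootSet_subset (p : K[X])
    [p.IsSplittingField K L] {r : L} (h : p.rootSet L ⊆ K⟮r⟯) : K⟮r⟯ = ⊤ := by
  rw [eq_top_iff, ← ((isSplittingField_iff_intermediateField (p := p)).mp inferInstance).2,
    adjoin_le_iff]
  exact h

theorem finrank_eq_natDegree_of_rootSet_subset_adjoin {p : K[X]} [p.IsSplittingField K L]
    (hirr : Irreducible p) (hmonic : p.Monic) {r : L} (hr : r ∈ p.rootSet L)
    (h : p.rootSet L ⊆ K⟮r⟯) : finrank K L = p.natDegree := by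
  have hroot : aeval r p = 0 := (mem_rootSet.mp hr).2
  rw [← finrank_top', ← adjoin_simple_eq_top_of_rootSet_subset p h,
    adjoin.finrank ⟨p, hmonic, hroot⟩, ← minpoly.eq_of_irreducible_of_monic hirr hroot hmonic]

theorem Polynomial.Gal.isCyclic_of_finrank_prime {p : K[X]} (hp : p.Separable)
    (h : (finrank K p.SplittingField).Prime) : IsCyclic p.Gal :=
  haveI := Fact.mk h
  isCyclic_of_prime_card (Gal.card_of_separable hp)

end SplittingField

/-- Over `ℚ` the instance `Algebra ℚ p.SplittingField` is found as `DivisionRing.toRatAlgebra`,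
which is not reducibly defeq to the one `IsSplittingField.splittingField` is stated for. -/
instance Polynomial.IsSplittingField.splittingField_rat (p : ℚ[X]) :
    IsSplittingField ℚ p.SplittingField p :=
  IsSplittingField.splittingField p

noncomputable def shanksCubic {R : Type*} [CommRing R] (a : R) : R[X] :=
  X ^ 3 - C a * X ^ 2 - C (a + 3) * X - C 1

section CommRing

variable {R S : Type*} [CommRing R] [CommRing S]

theorem shanksCubic_monic (a : R) : (shanksCubic a).Monic := by
  unfold shanksCubic; monicity!

theorem natDegree_shanksCubic [Nontrivial R] (a : R) : (shanksCubic a).natDegree = 3 := by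
  unfold shanksCubic; compute_degree!

theorem shanksCubic_map (φ : R →+* S) (a : R) : (shanksCubic a).map φ = shanksCubic (φ a) := by
  simp [shanksCubic, map_ofNat]

theorem eval_shanksCubic (a x : R) :
    (shanksCubic a).eval x = x ^ 3 - a * x ^ 2 - (a + 3) * x - 1 := by
  simp [shanksCubic, map_ofNat]

end CommRing

section Field

variable {K L : Type*} [Field K] [Field L] [Algebra K L]

theorem shanksCubic_eq_mul_of_isRoot {a r : K} (hr : (shanksCubic a).IsRoot r) :
    shanksCubic a = (X - C r) * (X - C (-(1 + r)⁻¹)) * (X - C (-(1 + r) / r)) := by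
  rw [IsRoot, eval_shanksCubic] at hr
  have hr0 : r ≠ 0 := by rintro rfl; norm_num at hr
  have hr1 : 1 + r ≠ 0 := by
    intro h
    rw [show r = -1 by linear_combination h] at hr
    exact one_ne_zero (by linear_combination hr)
  have e1 : r + -(1 + r)⁻¹ + -(1 + r) / r = a := by
    field_simp; linear_combination hr
  have e2 : r * -(1 + r)⁻¹ + r * (-(1 + r) / r) + -(1 + r)⁻¹ * (-(1 + r) / r) = -(a + 3) := by
    field_simp; linear_combination -hr
  have e3 : r * -(1 + r)⁻¹ * (-(1 + r) / r) = 1 := by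
    field_simp
  have c1 := congrArg C e1
  have c2 := congrArg C e2
  have c3 := congrArg C e3
  simp only [shanksCubic, map_add, map_mul, map_neg, map_ofNat] at c1 c2 c3 ⊢
  linear_combination X ^ 2 * c1 - X * c2 + c3

theorem isRoot_of_mem_rootSet_shanksCubic {a : K} {x : L}
    (hx : x ∈ (shanksCubic a).rootSet L) : (shanksCubic (algebraMap K L a)).IsRoot x := by
  rw [mem_rootSet, aeval_def, eval₂_eq_eval_map, shanksCubic_map] at hx
  exact hx.2

theorem rootSet_shanksCubic_subset_adjoin {a : K} {r : L} (hr : r ∈ (shanksCubic a).rootSet L) :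
    (shanksCubic a).rootSet L ⊆ K⟮r⟯ := by
  intro y hy
  have hr' := mem_adjoin_simple_self K r
  have hy' := isRoot_of_mem_rootSet_shanksCubic hy
  rw [shanksCubic_eq_mul_of_isRoot (isRoot_of_mem_rootSet_shanksCubic hr)] at hy'
  simp only [IsRoot, eval_mul, eval_sub, eval_X, eval_C, mul_eq_zero, sub_eq_zero] at hy'
  rcases hy' with (rfl | rfl) | rfl
  · exact hr'
  · exact neg_mem (inv_mem (add_mem (one_mem _) hr'))
  · exact div_mem (neg_mem (add_mem (one_mem _) hr')) hr'

end Field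

theorem irreducible_shanksCubic_intCast (n : ℤ) : Irreducible (shanksCubic (n : ℚ)) := by
  rw [irreducible_iff_roots_eq_zero_of_degree_le_three (by rw [natDegree_shanksCubic]; norm_num)
    (by rw [natDegree_shanksCubic]), Multiset.eq_zero_iff_forall_notMem]
  intro x hx
  have hroot : aeval x (shanksCubic n) = 0 := by
    rw [aeval_def, eval₂_eq_eval_map, shanksCubic_map]
    exact (mem_roots'.mp hx).2
  obtain ⟨m, rfl, hm⟩ := exists_integer_of_is_root_of_monic (shanksCubic_monic (n : ℤ)) hroot
  rw [aeval_algebraMap_apply_eq_algebraMap_eval, map_eq_zero_iff _ (algebraMap ℤ ℚ).injective_int,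
    eval_shanksCubic] at hroot
  rw [coeff_zero_eq_eval_zero, eval_shanksCubic] at hm
  have hm1 : m = 1 ∨ m = -1 := Int.isUnit_iff.mp (isUnit_of_dvd_one (by simpa using hm))
  rcases hm1 with rfl | rfl <;> omega

theorem finrank_splittingField_shanksCubic_intCast (n : ℤ) :
    finrank ℚ (shanksCubic (n : ℚ)).SplittingField = 3 := by
  have hmonic := shanksCubic_monic (n : ℚ)
  obtain ⟨r, heval⟩ := (SplittingField.splits (shanksCubic (n : ℚ))).exists_eval_eq_zero
    (by rw [degree_map, degree_eq_natDegree hmonic.ne_zero, natDegree_shanksCubic]; norm_num)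
  have hr : r ∈ (shanksCubic (n : ℚ)).rootSet (shanksCubic (n : ℚ)).SplittingField :=
    mem_rootSet.mpr ⟨hmonic.ne_zero, by rwa [aeval_def, eval₂_eq_eval_map]⟩
  rw [finrank_eq_natDegree_of_rootSet_subset_adjoin (irreducible_shanksCubic_intCast n) hmonic hr
    (rootSet_shanksCubic_subset_adjoin hr), natDegree_shanksCubic]

theorem shanks_cubic_splittingField_cyclic_cubic (n : ℤ)
    (f : ℚ[X]) (hf : f = X ^ 3 - C (n : ℚ) * X ^ 2 - C ((n : ℚ) + 3) * X - C 1) :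
    IsGalois ℚ f.SplittingField ∧ Module.finrank ℚ f.SplittingField = 3 ∧ IsCyclic f.Gal := by
  replace hf : f = shanksCubic (n : ℚ) := hf
  subst hf
  have hsep := (irreducible_shanksCubic_intCast n).separable
  have hdeg := finrank_splittingField_shanksCubic_intCast n
  exact ⟨IsGalois.of_separable_splitting_field hsep, hdeg,
    Gal.isCyclic_of_finrank_prime hsep (hdeg ▸ Nat.prime_three)⟩
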